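/- arXiv:2306.08794 — 2 statements merged into one kernel-verified Lean document; each statement's English description precedes it below -/
import Mathlib

section
/- For all real numbers x ≠ 0 and y, the integral representation y·∫₀¹ [𝟙(x ≤ y·s) − 𝟙(x ≤ 0)] ds = (x−y)·[𝟙(0 > x > y) − 𝟙(0 < x < y)] holds, so that ρ_τ(x−y) − ρ_τ(x) = −y·ψ_τ(x) + y·∫₀¹ [𝟙(x ≤ y·s) − 𝟙(x ≤ 0)] ds. -/
noncomputable def psi (τ x : ℝ) : ℝ := τ - if x < 0 then 1 else 0

noncomputable def rho (τ x : ℝ) : ℝ := x * psi τ x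

/-! Substituting `t = y * s` turns the left-hand side into `∫ t in 0..y, (𝟙(x ≤ t) - 𝟙(x ≤ 0))`.
The step `t ↦ 𝟙(x ≤ t)` is the right derivative of `t ↦ max (t - x) 0` at every point, so the
integral equals `max (y - x) 0 - max (-x) 0 - y * 𝟙(x ≤ 0)`, and both identities reduce to a
sign case analysis on `x` and `x - y`. -/

open Set intervalIntegral Topology

theorem monotone_ite_le (x : ℝ) : Monotone fun t : ℝ => if x ≤ t then (1:ℝ) else 0 := by
  intro a b hab
  by_cases ha : x ≤ a
  · simp [ha, ha.trans hab]
  · by_cases hb : x ≤ b <;> simp [ha, hb]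

theorem hasDerivWithinAt_max_sub_zero_Ioi (x t : ℝ) :
    HasDerivWithinAt (fun u => max (u - x) 0) (if x ≤ t then 1 else 0) (Ioi t) t := by
  split_ifs with h
  · exact ((hasDerivAt_id t).sub_const x).hasDerivWithinAt.congr
      (fun u hu => max_eq_left (by linarith [mem_Ioi.1 hu])) (max_eq_left (by simpa))
  · have hzero : (fun u => max (u - x) 0) =ᶠ[𝓝 t] fun _ => 0 :=
      (eventually_lt_nhds (not_le.1 h)).mono fun u hu => max_eq_right (by linarith)
    exact ((hasDerivAt_const t 0).congr_of_eventuallyEq hzero).hasDerivWithinAt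

theorem integral_ite_le (x a b : ℝ) :
    ∫ t in a..b, (if x ≤ t then (1:ℝ) else 0) = max (b - x) 0 - max (a - x) 0 :=
  integral_eq_sub_of_hasDeriv_right (by fun_prop)
    (fun t _ => hasDerivWithinAt_max_sub_zero_Ioi x t) (monotone_ite_le x).intervalIntegrable

theorem mul_integral_step_sub_step (x y : ℝ) :
    y * ∫ s in (0:ℝ)..1, ((if x ≤ y * s then (1:ℝ) else 0) - (if x ≤ 0 then (1:ℝ) else 0))
      = max (y - x) 0 - max (-x) 0 - y * (if x ≤ 0 then 1 else 0) := by
  rw [mul_integral_comp_mul_left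
      (f := fun t => (if x ≤ t then (1:ℝ) else 0) - if x ≤ 0 then 1 else 0),
    integral_sub (monotone_ite_le x).intervalIntegrable intervalIntegrable_const,
    integral_ite_le, integral_const]
  simp

theorem knight_integral_eq (x y : ℝ) (hx : x ≠ 0) :
    (y * ∫ s in (0:ℝ)..1,
        ((if x ≤ y * s then (1:ℝ) else 0) - (if x ≤ 0 then (1:ℝ) else 0)))
      = (x - y) * ((if y < x ∧ x < 0 then (1:ℝ) else 0) -
          (if 0 < x ∧ x < y then (1:ℝ) else 0)) := by
  rw [mul_integral_step_sub_step]
  grind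

theorem rho_sub_sub_rho (τ : ℝ) {x : ℝ} (y : ℝ) (hx : x ≠ 0) :
    rho τ (x - y) - rho τ x = -y * psi τ x +
      (x - y) * ((if y < x ∧ x < 0 then (1:ℝ) else 0) - (if 0 < x ∧ x < y then (1:ℝ) else 0)) := by
  unfold rho psi
  grind

/-- The integral representation of the second term in Knight's identity. -/
theorem knight_integral (x y : ℝ) (hx : x ≠ 0) :
    (y * ∫ s in (0:ℝ)..1,
        ((if x ≤ y * s then (1:ℝ) else 0) - (if x ≤ 0 then (1:ℝ) else 0)))
      = (x - y) * ((if y < x ∧ x < 0 then (1:ℝ) else 0) -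
          (if 0 < x ∧ x < y then (1:ℝ) else 0))
    ∧ ∀ τ ∈ Set.Ioo (0:ℝ) 1,
        rho τ (x - y) - rho τ x =
          -y * psi τ x +
            y * ∫ s in (0:ℝ)..1,
              ((if x ≤ y * s then (1:ℝ) else 0) - (if x ≤ 0 then (1:ℝ) else 0)) := by
  refine ⟨knight_integral_eq x y hx, fun τ _ => ?_⟩
  rw [knight_integral_eq x y hx]
  exact rho_sub_sub_rho τ y hx
end

section
/- Let ω, α : (0,1) → ℝ be monotonically increasing with ω(1/2) = α(1/2) = 0, and let β : (0,1) → [0,1) be monotonically decreasing on (0,1/2) and monotonically increasing on (1/2,1). Then for any sequence (a_j)_{j≥1} of nonnegative reals such that the series below converge, the map τ ↦ ω(τ) + α(τ)·Σ_{j=1}^∞ β(τ)^{j−1}·a_j is monotonically increasing on (0,1). -/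
/-- Sufficient condition for monotonicity of the conditional quantile function of the
quantile GARCH(1,1) model. -/
theorem qgarch_quantile_monotone (ω α β : ℝ → ℝ) (a : ℕ → ℝ)
    (hω : MonotoneOn ω (Set.Ioo 0 1)) (hα : MonotoneOn α (Set.Ioo 0 1))
    (hω0 : ω (1/2) = 0) (hα0 : α (1/2) = 0)
    (hβ : ∀ τ ∈ Set.Ioo (0:ℝ) 1, 0 ≤ β τ ∧ β τ < 1)
    (hβdec : AntitoneOn β (Set.Ioo 0 (1/2)))
    (hβinc : MonotoneOn β (Set.Ioo (1/2) 1))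
    (ha : ∀ j, 0 ≤ a j)
    (hsum : ∀ τ ∈ Set.Ioo (0:ℝ) 1, Summable (fun j : ℕ => β τ ^ j * a j)) :
    MonotoneOn (fun τ => ω τ + α τ * ∑' j : ℕ, β τ ^ j * a j) (Set.Ioo 0 1) := by
  have h2 : (1/2 : ℝ) ∈ Set.Ioo (0:ℝ) 1 := by norm_num
  have hSnn : ∀ τ ∈ Set.Ioo (0:ℝ) 1, 0 ≤ ∑' j : ℕ, β τ ^ j * a j := fun τ hτ =>
    tsum_nonneg fun j => mul_nonneg (pow_nonneg (hβ τ hτ).1 j) (ha j)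
  have hSle : ∀ σ ∈ Set.Ioo (0:ℝ) 1, ∀ τ ∈ Set.Ioo (0:ℝ) 1, β σ ≤ β τ →
      (∑' j : ℕ, β σ ^ j * a j) ≤ ∑' j : ℕ, β τ ^ j * a j := by
    intro σ hσ τ hτ hb
    exact Summable.tsum_le_tsum
      (fun j => mul_le_mul_of_nonneg_right (pow_le_pow_left₀ (hβ σ hσ).1 hb j) (ha j))
      (hsum σ hσ) (hsum τ hτ)
  intro x hx y hy hxy
  have hωle := hω hx hy hxy
  have key : α x * (∑' j : ℕ, β x ^ j * a j) ≤ α y * (∑' j : ℕ, β y ^ j * a j) := by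
    rcases le_or_gt y (1/2) with h | h
    · have hαy : α y ≤ 0 := hα0 ▸ hα hy h2 h
      have hαxy : α x ≤ α y := hα hx hy hxy
      rcases eq_or_lt_of_le h with heq | h'
      · rw [heq, hα0, zero_mul]
        exact mul_nonpos_of_nonpos_of_nonneg (hαxy.trans hαy) (hSnn x hx)
      · have hxm : x ∈ Set.Ioo (0:ℝ) (1/2) := ⟨hx.1, lt_of_le_of_lt hxy h'⟩
        have hym : y ∈ Set.Ioo (0:ℝ) (1/2) := ⟨hy.1, h'⟩
        have hS : (∑' j : ℕ, β y ^ j * a j) ≤ ∑' j : ℕ, β x ^ j * a j :=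
          hSle y hy x hx (hβdec hxm hym hxy)
        calc α x * (∑' j : ℕ, β x ^ j * a j)
            ≤ α x * (∑' j : ℕ, β y ^ j * a j) :=
              mul_le_mul_of_nonpos_left hS (hαxy.trans hαy)
          _ ≤ α y * (∑' j : ℕ, β y ^ j * a j) :=
              mul_le_mul_of_nonneg_right hαxy (hSnn y hy)
    · rcases le_or_gt x (1/2) with h' | h'
      · have hαx : α x ≤ 0 := hα0 ▸ hα hx h2 h'
        have hαy : 0 ≤ α y := hα0 ▸ hα h2 hy h.le
        exact le_trans (mul_nonpos_of_nonpos_of_nonneg hαx (hSnn x hx))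
          (mul_nonneg hαy (hSnn y hy))
      · have hxm : x ∈ Set.Ioo (1/2 : ℝ) 1 := ⟨h', hx.2⟩
        have hym : y ∈ Set.Ioo (1/2 : ℝ) 1 := ⟨h, hy.2⟩
        have hαx : 0 ≤ α x := hα0 ▸ hα h2 hx h'.le
        have hS : (∑' j : ℕ, β x ^ j * a j) ≤ ∑' j : ℕ, β y ^ j * a j :=
          hSle x hx y hy (hβinc hxm hym hxy)
        calc α x * (∑' j : ℕ, β x ^ j * a j)
            ≤ α x * (∑' j : ℕ, β y ^ j * a j) := mul_le_mul_of_nonneg_left hS hαx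
          _ ≤ α y * (∑' j : ℕ, β y ^ j * a j) :=
              mul_le_mul_of_nonneg_right (hα hx hy hxy) (hSnn y hy)
  exact add_le_add hωle key
end
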